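/- arXiv:1102.4288 — 2 statements merged into one kernel-verified Lean document; each statement's English description precedes it below -/
import Mathlib

section
/- Let T > 0 and α : [0,T) → ℝ continuous with limit α(T) := lim_{t↑T} α(t) existing. If δ₁ ≤ α(t) ≤ δ₂ for all t ∈ [t₀,T) with 1/2 < δ₁ ≤ δ₂, then ∫₀ᵗ exp(2∫₀ˢ α(u)/(T-u) du) ds → ∞ as t ↑ T. -/
/-!
On `[t₀, T)` the integrand `α u / (T - u)` is at least `δ₁ / (T - u)`, so
`∫ u in t₀..s, α u / (T - u) ≥ δ₁ log ((T - t₀) / (T - s))`, and since `2 δ₁ ≥ 1` this gives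
`exp (2 ∫ u in 0..s, α u / (T - u)) ≥ C / (T - s)` with `C > 0`. The integral of `1 / (T - s)`
diverges logarithmically at `T`.
-/

open Real Filter intervalIntegral

open Set Topology
open MeasureTheory (volume)

lemma tendsto_sub_nhdsLT_nhdsGT_zero (T : ℝ) : Tendsto (T - ·) (𝓝[<] T) (𝓝[>] 0) := by
  have : MapsTo (T - ·) (Iio T) (Ioi 0) := fun t (ht : t < T) => sub_pos.2 ht
  simpa using (continuous_sub_left T).continuousWithinAt.tendsto_nhdsWithin (x := T) this

lemma tendsto_neg_log_sub_nhdsLT (T : ℝ) : Tendsto (fun t => -log (T - t)) (𝓝[<] T) atTop :=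
  tendsto_neg_atBot_atTop.comp (tendsto_log_nhdsGT_zero.comp (tendsto_sub_nhdsLT_nhdsGT_zero T))

lemma integral_inv_sub {T s t : ℝ} (hst : s ≤ t) (htT : t < T) :
    ∫ u in s..t, (T - u)⁻¹ = log (T - s) - log (T - t) := by
  rw [integral_comp_sub_left (fun x => x⁻¹) T, integral_inv_of_pos (by linarith) (by linarith),
    log_div (by linarith) (by linarith)]

lemma IntervalIntegrable.comp_primitive {f φ : ℝ → ℝ} {a t : ℝ} (hφ : Continuous φ)
    (hf : IntervalIntegrable f volume a t) :
    IntervalIntegrable (fun s => φ (∫ u in a..s, f u)) volume a t :=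
  (hφ.comp_continuousOn (continuousOn_primitive_interval' hf left_mem_uIcc)).intervalIntegrable

lemma mul_log_sub_le_integral {f : ℝ → ℝ} {T t₀ s δ : ℝ} (hs : s ∈ Ico t₀ T)
    (hf : IntervalIntegrable f volume t₀ s) (hlow : ∀ u ∈ Ico t₀ T, δ / (T - u) ≤ f u) :
    δ * (log (T - t₀) - log (T - s)) ≤ ∫ u in t₀..s, f u := by
  have hcont : ContinuousOn (fun u => δ * (T - u)⁻¹) (uIcc t₀ s) := by
    refine continuousOn_const.mul ((continuousOn_const.sub continuousOn_id).inv₀ fun u hu => ?_)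
    rw [uIcc_of_le hs.1] at hu
    exact (sub_pos.2 (hu.2.trans_lt hs.2)).ne'
  calc δ * (log (T - t₀) - log (T - s)) = ∫ u in t₀..s, δ * (T - u)⁻¹ := by
        rw [intervalIntegral.integral_const_mul, integral_inv_sub hs.1 hs.2]
    _ ≤ ∫ u in t₀..s, f u :=
        integral_mono_on hs.1 hcont.intervalIntegrable hf fun u hu =>
          hlow u ⟨hu.1, hu.2.trans_lt hs.2⟩

lemma tendsto_integral_nhdsLT_atTop_of_div_sub_le {g : ℝ → ℝ} {a t₀ T c : ℝ}
    (ht₀ : t₀ ∈ Ico a T) (hc : 0 < c)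
    (hg : ∀ t ∈ Ico a T, IntervalIntegrable g volume a t)
    (hlow : ∀ s ∈ Ico t₀ T, c / (T - s) ≤ g s) :
    Tendsto (fun t => ∫ s in a..t, g s) (𝓝[<] T) atTop := by
  have hg' : ∀ t ∈ Ico t₀ T, IntervalIntegrable g volume t₀ t := fun t ht =>
    (hg t₀ ht₀).symm.trans (hg t ⟨ht₀.1.trans ht.1, ht.2⟩)
  have hbound : ∀ t ∈ Ico t₀ T,
      (∫ s in a..t₀, g s) + c * (log (T - t₀) - log (T - t)) ≤ ∫ s in a..t, g s := by
    intro t ht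
    rw [← integral_add_adjacent_intervals (hg t₀ ht₀) (hg' t ht)]
    linarith [mul_log_sub_le_integral ht (hg' t ht) hlow]
  have hlim : Tendsto (fun t => (∫ s in a..t₀, g s) + c * (log (T - t₀) - log (T - t)))
      (𝓝[<] T) atTop := by
    refine tendsto_atTop_add_const_left _ _ (Tendsto.const_mul_atTop hc ?_)
    simpa only [sub_eq_add_neg] using
      tendsto_atTop_add_const_left _ _ (tendsto_neg_log_sub_nhdsLT T)
  refine tendsto_atTop_mono' _ ?_ hlim
  filter_upwards [Ico_mem_nhdsLT ht₀.2] with t ht using hbound t ht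

lemma div_sub_le_exp_two_mul_integral {f : ℝ → ℝ} {a t₀ T s δ : ℝ} (ht₀ : t₀ ∈ Ico a T)
    (hs : s ∈ Ico t₀ T) (hf : ∀ t ∈ Ico a T, IntervalIntegrable f volume a t)
    (hδ : 1 / 2 ≤ δ) (hlow : ∀ u ∈ Ico t₀ T, δ / (T - u) ≤ f u) :
    exp (2 * ∫ u in a..t₀, f u) * (T - t₀) / (T - s) ≤ exp (2 * ∫ u in a..s, f u) := by
  have hf' : IntervalIntegrable f volume t₀ s :=
    (hf t₀ ht₀).symm.trans (hf s ⟨ht₀.1.trans hs.1, hs.2⟩)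
  have hlog : 0 ≤ log (T - t₀) - log (T - s) :=
    sub_nonneg.2 (log_le_log (by linarith [hs.2]) (by linarith [hs.1]))
  have hmain := mul_log_sub_le_integral hs hf' hlow
  rw [← integral_add_adjacent_intervals (hf t₀ ht₀) hf', mul_div_assoc,
    ← exp_log (div_pos (sub_pos.2 (hs.1.trans_lt hs.2)) (sub_pos.2 hs.2)), ← exp_add,
    exp_le_exp, log_div (by linarith [hs.1, hs.2]) (by linarith [hs.2])]
  -- `2 δ L ≥ L` because `L = log ((T - t₀) / (T - s)) ≥ 0` and `2 δ ≥ 1`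
  nlinarith

theorem stmt_2_general (T : ℝ) (α : ℝ → ℝ)
    (hα : ContinuousOn α (Set.Ico 0 T))
    (t₀ δ₁ δ₂ : ℝ) (ht₀ : t₀ ∈ Set.Ioo (0:ℝ) T)
    (hδ₁ : 1/2 < δ₁)
    (hbound : ∀ t ∈ Set.Ico t₀ T, δ₁ ≤ α t ∧ α t ≤ δ₂) :
    Tendsto (fun t => ∫ s in (0:ℝ)..t, Real.exp (2 * ∫ u in (0:ℝ)..s, α u / (T - u)))
      (nhdsWithin T (Set.Iio T)) atTop := by
  have ht₀' : t₀ ∈ Ico 0 T := Ioo_subset_Ico_self ht₀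
  have hcont : ContinuousOn (fun u => α u / (T - u)) (Ico 0 T) :=
    hα.div (by fun_prop) fun u hu => (sub_pos.2 hu.2).ne'
  have hint : ∀ t ∈ Ico 0 T, IntervalIntegrable (fun u => α u / (T - u)) volume 0 t :=
    fun t ht =>
      (hcont.mono (ordConnected_Ico.uIcc_subset ⟨le_rfl, ht.1.trans_lt ht.2⟩ ht)).intervalIntegrable
  have hlow : ∀ u ∈ Ico t₀ T, δ₁ / (T - u) ≤ α u / (T - u) := fun u hu =>
    div_le_div_of_nonneg_right (hbound u hu).1 (sub_pos.2 hu.2).le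
  refine tendsto_integral_nhdsLT_atTop_of_div_sub_le ht₀' (mul_pos (exp_pos _) (sub_pos.2 ht₀.2))
    (fun t ht => (hint t ht).comp_primitive (φ := fun x => exp (2 * x)) (by fun_prop))
    fun s hs =>
      div_sub_le_exp_two_mul_integral ht₀' hs hint hδ₁.le hlow

theorem stmt_2 (T : ℝ) (hT : 0 < T) (α : ℝ → ℝ)
    (hα : ContinuousOn α (Set.Ico 0 T))
    (αT : ℝ) (hlim : Tendsto α (nhdsWithin T (Set.Iio T)) (nhds αT))
    (t₀ δ₁ δ₂ : ℝ) (ht₀ : t₀ ∈ Set.Ioo (0:ℝ) T)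
    (hδ₁ : 1/2 < δ₁) (hδ₁₂ : δ₁ ≤ δ₂)
    (hbound : ∀ t ∈ Set.Ico t₀ T, δ₁ ≤ α t ∧ α t ≤ δ₂) :
    Tendsto (fun t => ∫ s in (0:ℝ)..t, Real.exp (2 * ∫ u in (0:ℝ)..s, α u / (T - u)))
      (nhdsWithin T (Set.Iio T)) atTop :=
  stmt_2_general T α hα t₀ δ₁ δ₂ ht₀ hδ₁ hbound
end

section
/- Let T > 0 and α : [0,T) → ℝ continuous. If there exist t₀ ∈ (0,T) and 0 < δ₂ < 1/2 with α(t) ≤ δ₂ for all t ∈ [t₀,T), then the limit lim_{t↑T} ∫₀ᵗ exp(2∫₀ˢ α(u)/(T-u) du) ds is finite. -/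
open Real Filter intervalIntegral

theorem stmt_3 (T : ℝ) (hT : 0 < T) (α : ℝ → ℝ)
    (hα : ContinuousOn α (Set.Ico 0 T))
    (t₀ δ₂ : ℝ) (ht₀ : t₀ ∈ Set.Ioo (0:ℝ) T)
    (hδ₂ : δ₂ ∈ Set.Ioo (0:ℝ) (1/2))
    (hbound : ∀ t ∈ Set.Ico t₀ T, α t ≤ δ₂) :
    ∃ L : ℝ,
      Tendsto (fun t => ∫ s in (0:ℝ)..t, Real.exp (2 * ∫ u in (0:ℝ)..s, α u / (T - u)))
        (nhdsWithin T (Set.Iio T)) (nhds L) := by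
  obtain ⟨ht₀0, ht₀T⟩ := ht₀
  obtain ⟨hδ0, hδhalf⟩ := hδ₂
  set G : ℝ → ℝ := fun s => ∫ u in (0:ℝ)..s, α u / (T - u) with hGdef
  set g : ℝ → ℝ := fun s => Real.exp (2 * G s) with hgdef
  set F : ℝ → ℝ := fun t => ∫ s in (0:ℝ)..t, g s with hFdef
  have hcont : ContinuousOn (fun u => α u / (T - u)) (Set.Ico 0 T) := by
    apply hα.div ((continuous_const.sub continuous_id).continuousOn)
    intro u hu; exact sub_ne_zero.2 (ne_of_gt hu.2)
  have hIccsub : ∀ b : ℝ, b < T → Set.Icc (0:ℝ) b ⊆ Set.Ico 0 T :=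
    fun b hb x hx => ⟨hx.1, lt_of_le_of_lt hx.2 hb⟩
  have hGcont : ∀ b : ℝ, 0 ≤ b → b < T → ContinuousOn G (Set.Icc 0 b) := by
    intro b hb0 hbT
    have hint : MeasureTheory.IntegrableOn (fun u => α u / (T - u)) (Set.uIcc 0 b) := by
      rw [Set.uIcc_of_le hb0]
      exact (hcont.mono (hIccsub b hbT)).integrableOn_Icc
    have := intervalIntegral.continuousOn_primitive_interval hint
    rwa [Set.uIcc_of_le hb0] at this
  have hgcont : ∀ b : ℝ, 0 ≤ b → b < T → ContinuousOn g (Set.Icc 0 b) := by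
    intro b hb0 hbT
    exact Real.continuous_exp.comp_continuousOn (continuousOn_const.mul (hGcont b hb0 hbT))
  have hgint : ∀ a b : ℝ, 0 ≤ a → a ≤ b → b < T →
      IntervalIntegrable g MeasureTheory.volume a b := by
    intro a b ha hab hbT
    apply ContinuousOn.intervalIntegrable
    apply (hgcont b (ha.trans hab) hbT).mono
    rw [Set.uIcc_of_le hab]
    exact fun x hx => ⟨ha.trans hx.1, hx.2⟩
  have hFmono : MonotoneOn F (Set.Ioo 0 T) := by
    intro t₁ h1 t₂ h2 h12
    have h1' := hgint 0 t₁ le_rfl h1.1.le (h12.trans_lt h2.2)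
    have h2' := hgint t₁ t₂ h1.1.le h12 h2.2
    have hsplit : F t₂ = F t₁ + ∫ s in t₁..t₂, g s := by
      rw [hFdef]
      exact (intervalIntegral.integral_add_adjacent_intervals h1' h2').symm
    have hnn : 0 ≤ ∫ s in t₁..t₂, g s :=
      intervalIntegral.integral_nonneg h12 (fun u _ => (Real.exp_pos _).le)
    rw [hsplit]; linarith
  set p : ℝ := 2 * δ₂ with hpdef
  have hp0 : 0 < p := by rw [hpdef]; linarith
  have hp1 : p < 1 := by rw [hpdef]; linarith
  have hTt₀ : 0 < T - t₀ := sub_pos.2 ht₀T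
  obtain ⟨C, hC⟩ := (isCompact_Icc (a := (0:ℝ)) (b := t₀)).exists_bound_of_continuousOn
    (hGcont t₀ ht₀0.le ht₀T)
  -- pointwise bound on g for s ∈ [t₀, T)
  have hkey : ∀ s, t₀ ≤ s → s < T → g s ≤ Real.exp (2*C) * ((T - t₀)/(T - s)) ^ p := by
    intro s hs hsT
    have hTs : 0 < T - s := sub_pos.2 hsT
    have hsubs : Set.Icc t₀ s ⊆ Set.Ico 0 T :=
      fun x hx => ⟨ht₀0.le.trans hx.1, lt_of_le_of_lt hx.2 hsT⟩
    have hGsplit : G s = G t₀ + ∫ u in t₀..s, α u / (T - u) := by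
      rw [hGdef]
      refine (intervalIntegral.integral_add_adjacent_intervals ?_ ?_).symm
      · apply ContinuousOn.intervalIntegrable
        apply hcont.mono; rw [Set.uIcc_of_le ht₀0.le]; exact hIccsub t₀ ht₀T
      · apply ContinuousOn.intervalIntegrable
        apply hcont.mono; rw [Set.uIcc_of_le hs]; exact hsubs
    have hlog : (∫ u in t₀..s, (T - u)⁻¹) = Real.log ((T - t₀)/(T - s)) := by
      have h1 : (∫ u in t₀..s, (T - u)⁻¹) = ∫ x in T - s..T - t₀, x⁻¹ :=
        intervalIntegral.integral_comp_sub_left (fun x => x⁻¹) T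
      rw [h1, integral_inv_of_pos hTs hTt₀]
    have hmono : (∫ u in t₀..s, α u / (T - u)) ≤ ∫ u in t₀..s, δ₂ * (T - u)⁻¹ := by
      apply intervalIntegral.integral_mono_on hs
      · apply ContinuousOn.intervalIntegrable
        apply hcont.mono; rw [Set.uIcc_of_le hs]; exact hsubs
      · apply ContinuousOn.intervalIntegrable
        apply ContinuousOn.mul continuousOn_const
        apply ContinuousOn.inv₀ ((continuous_const.sub continuous_id).continuousOn)
        intro x hx
        rw [Set.uIcc_of_le hs] at hx
        exact ne_of_gt (sub_pos.2 (lt_of_le_of_lt hx.2 hsT))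
      · intro u hu
        rw [div_eq_mul_inv]
        have hTu : (0:ℝ) < (T - u)⁻¹ := inv_pos.2 (sub_pos.2 (lt_of_le_of_lt hu.2 hsT))
        exact mul_le_mul_of_nonneg_right (hbound u ⟨hu.1, lt_of_le_of_lt hu.2 hsT⟩) hTu.le
    have hGt₀ : G t₀ ≤ C := by
      have := hC t₀ ⟨ht₀0.le, le_rfl⟩
      rw [Real.norm_eq_abs] at this
      exact (le_abs_self _).trans this
    have h2 : (∫ u in t₀..s, δ₂ * (T - u)⁻¹) = δ₂ * Real.log ((T - t₀)/(T - s)) := by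
      rw [intervalIntegral.integral_const_mul, hlog]
    have hGle : G s ≤ C + δ₂ * Real.log ((T - t₀)/(T - s)) := by
      rw [hGsplit]; rw [h2] at hmono; linarith
    have hrpow : ((T - t₀)/(T - s)) ^ p = Real.exp (p * Real.log ((T - t₀)/(T - s))) := by
      rw [Real.rpow_def_of_pos (div_pos hTt₀ hTs), mul_comm]
    show Real.exp (2 * G s) ≤ _
    rw [hrpow, ← Real.exp_add]
    apply Real.exp_le_exp.2
    rw [hpdef]
    linarith
  -- bound on the tail integral
  set B : ℝ := Real.exp (2*C) * (T - t₀) ^ p * ((T - t₀) ^ (1 - p) / (1 - p)) with hBdef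
  have hBnn : 0 ≤ B := by
    rw [hBdef]
    apply mul_nonneg (mul_nonneg (Real.exp_pos _).le (Real.rpow_nonneg hTt₀.le _))
    exact div_nonneg (Real.rpow_nonneg hTt₀.le _) (by linarith)
  have hB : ∀ t, t₀ ≤ t → t < T → (∫ s in t₀..t, g s) ≤ B := by
    intro t ht hlt
    have hTt : 0 < T - t := sub_pos.2 hlt
    have hbint : IntervalIntegrable
        (fun s => Real.exp (2*C) * (T - t₀) ^ p * (T - s) ^ (-p)) MeasureTheory.volume t₀ t := by
      apply ContinuousOn.intervalIntegrable
      apply ContinuousOn.mul continuousOn_const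
      apply ContinuousOn.rpow_const ((continuous_const.sub continuous_id).continuousOn)
      intro x hx
      left
      rw [Set.uIcc_of_le ht] at hx
      exact ne_of_gt (sub_pos.2 (lt_of_le_of_lt hx.2 hlt))
    have hgint' : IntervalIntegrable g MeasureTheory.volume t₀ t := by
      apply ContinuousOn.intervalIntegrable
      apply (hgcont t (ht₀0.le.trans ht) hlt).mono
      rw [Set.uIcc_of_le ht]
      exact fun x hx => ⟨ht₀0.le.trans hx.1, hx.2⟩
    have step1 : (∫ s in t₀..t, g s)
        ≤ ∫ s in t₀..t, Real.exp (2*C) * (T - t₀) ^ p * (T - s) ^ (-p) := by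
      apply intervalIntegral.integral_mono_on ht hgint' hbint
      intro s hs
      have hTs : 0 < T - s := sub_pos.2 (lt_of_le_of_lt hs.2 hlt)
      calc g s ≤ Real.exp (2*C) * ((T - t₀)/(T - s)) ^ p := hkey s hs.1 (lt_of_le_of_lt hs.2 hlt)
        _ = Real.exp (2*C) * (T - t₀) ^ p * (T - s) ^ (-p) := by
            rw [Real.div_rpow hTt₀.le hTs.le, Real.rpow_neg hTs.le, div_eq_mul_inv, mul_assoc]
    have step2 : (∫ s in t₀..t, (T - s) ^ (-p))
        = ((T - t₀) ^ (-p + 1) - (T - t) ^ (-p + 1)) / (-p + 1) := by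
      have h1 : (∫ s in t₀..t, (T - s) ^ (-p)) = ∫ x in T - t..T - t₀, x ^ (-p) :=
        intervalIntegral.integral_comp_sub_left (fun x => x ^ (-p)) T
      rw [h1, integral_rpow (Or.inl (by linarith : (-1:ℝ) < -p))]
    have step3 : (∫ s in t₀..t, Real.exp (2*C) * (T - t₀) ^ p * (T - s) ^ (-p)) ≤ B := by
      rw [intervalIntegral.integral_const_mul, step2, hBdef]
      apply mul_le_mul_of_nonneg_left _ (mul_nonneg (Real.exp_pos _).le (Real.rpow_nonneg hTt₀.le _))
      have hpos : (0:ℝ) ≤ (T - t) ^ (-p + 1) := Real.rpow_nonneg hTt.le _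
      have h1p : (0:ℝ) < -p + 1 := by linarith
      rw [show (1:ℝ) - p = -p + 1 by ring]
      exact (div_le_div_iff_of_pos_right h1p).mpr (by linarith)
    exact le_trans step1 step3
  -- boundedness of F on (0, T)
  have hBdd : BddAbove (F '' Set.Ioo 0 T) := by
    refine ⟨F t₀ + B, ?_⟩
    rintro y ⟨t, ht, rfl⟩
    by_cases hcase : t ≤ t₀
    · have h1 : F t ≤ F t₀ := hFmono ht ⟨ht₀0, ht₀T⟩ hcase
      linarith
    · push_neg at hcase
      have h0' := hgint 0 t₀ le_rfl ht₀0.le ht₀T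
      have h2' := hgint t₀ t ht₀0.le hcase.le ht.2
      have hsplit : F t = F t₀ + ∫ s in t₀..t, g s := by
        rw [hFdef]
        exact (intervalIntegral.integral_add_adjacent_intervals h0' h2').symm
      rw [hsplit]
      linarith [hB t hcase.le ht.2]
  exact ⟨_, MonotoneOn.tendsto_nhdsWithin_Ioo_left ⟨t₀, ht₀0, ht₀T⟩ hFmono hBdd⟩
end
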